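/- arXiv:1105.0407 — 3 statements merged into one kernel-verified Lean document; each statement's English description precedes it below -/
import Mathlib

section
/- Let f : ℝ → ℂ be a bounded continuous function with lim_{x→+∞} osc(f, [-2x,-x] ∪ [x,2x]) = 0, where osc(f,J) = sup_{t,τ∈J} |f(t)-f(τ)|. Suppose (h_k) is a real sequence tending to -∞ (or to +∞) such that g := lim_{k→∞} f(h_k) exists. Then for every R > 0, sup_{x ∈ [-R,R]} |f(x + h_k) - g| → 0 as k → ∞. -/
/-!
Along `h k → ±∞` the points `x + h k` (`|x| ≤ R`) and `h k` lie in one dyadic window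
`[-2t, -t] ∪ [t, 2t]` with `t = |h k| - R → ∞`, so `f (x + h k) - f (h k)` is bounded by the
oscillation of `f` on that window, which tends to `0`; boundedness of `f` makes the supremum
defining `osc` meaningful.
-/

open Filter Set

/-- Oscillation of a function on a set. -/
noncomputable def osc (f : ℝ → ℂ) (J : Set ℝ) : ℝ :=
  ⨆ t ∈ J, ⨆ τ ∈ J, ‖f t - f τ‖

open Topology

lemma norm_sub_le_osc {f : ℝ → ℂ} {J : Set ℝ} {M : ℝ} (hM : ∀ x ∈ J, ‖f x‖ ≤ M)
    {t τ : ℝ} (ht : t ∈ J) (hτ : τ ∈ J) : ‖f t - f τ‖ ≤ osc f J := by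
  have hdiff : ∀ a ∈ J, ∀ b ∈ J, ‖f a - f b‖ ≤ 2 * M := fun a ha b hb =>
    (norm_sub_le _ _).trans (by linarith [hM a ha, hM b hb])
  have hM2 : 0 ≤ 2 * M := (norm_nonneg _).trans (hdiff t ht t ht)
  have hinner : ∀ a ∈ J, ⨆ b ∈ J, ‖f a - f b‖ ≤ 2 * M := fun a ha =>
    Real.iSup_le (fun b => Real.iSup_le (hdiff a ha b) hM2) hM2
  refine (le_ciSup₂ (f := fun b (_ : b ∈ J) => ‖f t - f b‖) ⟨2 * M, ?_⟩ τ hτ).trans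
    (le_ciSup₂ (f := fun a (_ : a ∈ J) => ⨆ b ∈ J, ‖f a - f b‖) ⟨2 * M, ?_⟩ t ht)
  · simp only [mem_upperBounds, mem_iUnion, mem_range]
    rintro _ ⟨b, hb, rfl⟩
    exact hdiff t ht b hb
  · simp only [mem_upperBounds, mem_iUnion, mem_range]
    rintro _ ⟨a, ha, rfl⟩
    exact hinner a ha

lemma add_mem_window_of_three_mul_le_abs {R x y : ℝ} (hy : 3 * R ≤ |y|) (hx : x ∈ Icc (-R) R) :
    x + y ∈ Icc (-2 * (|y| - R)) (-(|y| - R)) ∪ Icc (|y| - R) (2 * (|y| - R)) := by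
  obtain ⟨hxl, hxu⟩ := hx
  rcases le_total 0 y with hy0 | hy0
  · rw [abs_of_nonneg hy0] at hy ⊢
    exact Or.inr ⟨by linarith, by linarith⟩
  · rw [abs_of_nonpos hy0] at hy ⊢
    exact Or.inl ⟨by linarith, by linarith⟩

lemma eventually_cocompact_norm_sub_le_of_tendsto_osc {f : ℝ → ℂ}
    (hbdd : ∃ M : ℝ, ∀ x, ‖f x‖ ≤ M)
    (hSO : Tendsto (fun x : ℝ => osc f (Icc (-2*x) (-x) ∪ Icc x (2*x))) atTop (𝓝 0))
    {R : ℝ} (hR : 0 ≤ R) {ε : ℝ} (hε : 0 < ε) :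
    ∀ᶠ y in cocompact ℝ, ∀ x ∈ Icc (-R) R, ‖f (x + y) - f y‖ ≤ ε := by
  obtain ⟨M, hM⟩ := hbdd
  have habs : Tendsto (fun y : ℝ => |y| - R) (cocompact ℝ) atTop :=
    tendsto_atTop_add_const_right _ _ tendsto_norm_cocompact_atTop
  filter_upwards [(hSO.comp habs).eventually (ge_mem_nhds hε),
    tendsto_norm_cocompact_atTop.eventually_ge_atTop (3 * R)] with y hosc hy x hx
  have hy' : y ∈ Icc (-2 * (|y| - R)) (-(|y| - R)) ∪ Icc (|y| - R) (2 * (|y| - R)) := by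
    simpa using add_mem_window_of_three_mul_le_abs hy ⟨neg_nonpos.mpr hR, hR⟩
  exact (norm_sub_le_osc (fun z _ => hM z) (add_mem_window_of_three_mul_le_abs hy hx) hy').trans
    hosc

theorem slowly_oscillating_uniform_limit_general
    (f : ℝ → ℂ) (hbdd : ∃ M : ℝ, ∀ x, ‖f x‖ ≤ M)
    (hSO : Tendsto (fun x : ℝ => osc f (Icc (-2*x) (-x) ∪ Icc x (2*x))) atTop (nhds 0))
    (h : ℕ → ℝ) (hh : Tendsto h atTop atBot ∨ Tendsto h atTop atTop)
    (g : ℂ) (hg : Tendsto (fun k => f (h k)) atTop (nhds g)) :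
    ∀ R > (0:ℝ), ∀ ε > (0:ℝ), ∀ᶠ k in atTop,
      ∀ x ∈ Icc (-R) R, ‖f (x + h k) - g‖ ≤ ε := by
  intro R hR ε hε
  have hcocompact : Tendsto h atTop (cocompact ℝ) := by
    rw [cocompact_eq_atBot_atTop]
    exact hh.elim (·.mono_right le_sup_left) (·.mono_right le_sup_right)
  filter_upwards [hcocompact.eventually
      (eventually_cocompact_norm_sub_le_of_tendsto_osc hbdd hSO hR.le (half_pos hε)),
    hg.eventually (Metric.closedBall_mem_nhds g (half_pos hε))] with k hlocal hlimit x hx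
  calc ‖f (x + h k) - g‖ ≤ ‖f (x + h k) - f (h k)‖ + ‖f (h k) - g‖ :=
        norm_sub_le_norm_sub_add_norm_sub _ _ _
    _ ≤ ε / 2 + ε / 2 := add_le_add (hlocal x hx) (mem_closedBall_iff_norm.mp hlimit)
    _ = ε := add_halves ε

/-- If `f` is a bounded continuous slowly oscillating function and `h k → ±∞` with
`f (h k) → g`, then `f (· + h k) → g` uniformly on every `[-R, R]`. -/
theorem slowly_oscillating_uniform_limit
    (f : ℝ → ℂ) (hcont : Continuous f) (hbdd : ∃ M : ℝ, ∀ x, ‖f x‖ ≤ M)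
    (hSO : Tendsto (fun x : ℝ => osc f (Icc (-2*x) (-x) ∪ Icc x (2*x))) atTop (nhds 0))
    (h : ℕ → ℝ) (hh : Tendsto h atTop atBot ∨ Tendsto h atTop atTop)
    (g : ℂ) (hg : Tendsto (fun k => f (h k)) atTop (nhds g)) :
    ∀ R > (0:ℝ), ∀ ε > (0:ℝ), ∀ᶠ k in atTop,
      ∀ x ∈ Icc (-R) R, ‖f (x + h k) - g‖ ≤ ε :=
  slowly_oscillating_uniform_limit_general f hbdd hSO h hh g hg
end

section
/- The function p_L(x) = α + sin(log(log|x|) · χ_{|x| ≥ e}(x)) on ℝ, with α > 2, is continuous, satisfies 1 < inf p_L and sup p_L < ∞, belongs to the class SO of slowly oscillating functions, but does not have equal limits at ±∞ in the sense that lim inf_{x→+∞} p_L(x) = α - 1 < α + 1 = lim sup_{x→+∞} p_L(x); in particular p_L ∉ C(ℝ̇). -/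
/-!
Write `p_L = α + sin ∘ φ` with `φ x = log (log (max e |x|))`. On `±[x, 2x]` the phase `φ` varies
by at most `log (log 2x) - log (log x) ≤ log 2 / log x` (from `log u ≤ u - 1`), and `sin` is
1-Lipschitz, so the oscillation there tends to `0`. Yet `φ` is unbounded, so `sin ∘ φ` attains
`-1` and `1` at arbitrarily large `x`, which pins down `liminf` and `limsup`.
-/

open Filter Set

/-- Oscillation of a real function on a set. -/
noncomputable def oscR (f : ℝ → ℝ) (J : Set ℝ) : ℝ :=
  ⨆ t ∈ J, ⨆ τ ∈ J, |f t - f τ|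

open Real Topology

lemma oscR_nonneg (f : ℝ → ℝ) (J : Set ℝ) : 0 ≤ oscR f J :=
  Real.iSup_nonneg fun _ => Real.iSup_nonneg fun _ =>
    Real.iSup_nonneg fun _ => Real.iSup_nonneg fun _ => abs_nonneg _

lemma oscR_le {f : ℝ → ℝ} {J : Set ℝ} {c : ℝ} (hc : 0 ≤ c)
    (h : ∀ t ∈ J, ∀ τ ∈ J, |f t - f τ| ≤ c) : oscR f J ≤ c :=
  Real.iSup_le (fun t => Real.iSup_le (fun ht => Real.iSup_le (fun τ =>
    Real.iSup_le (fun hτ => h t ht τ hτ) hc) hc) hc) hc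

lemma liminf_eq_of_eventually_le_of_frequently_le {ι : Type*} {l : Filter ι} [l.NeBot]
    {f : ι → ℝ} {m : ℝ} (hbdd : IsBoundedUnder (· ≤ ·) l f) (hle : ∀ᶠ i in l, m ≤ f i)
    (hfreq : ∃ᶠ i in l, f i ≤ m) : liminf f l = m :=
  le_antisymm (liminf_le_of_frequently_le hfreq (isBoundedUnder_of_eventually_ge hle))
    (le_liminf_of_le hbdd.isCoboundedUnder_ge hle)

lemma limsup_eq_of_eventually_le_of_frequently_le {ι : Type*} {l : Filter ι} [l.NeBot]
    {f : ι → ℝ} {M : ℝ} (hbdd : IsBoundedUnder (· ≥ ·) l f) (hle : ∀ᶠ i in l, f i ≤ M)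
    (hfreq : ∃ᶠ i in l, M ≤ f i) : limsup f l = M :=
  le_antisymm (limsup_le_of_le hbdd.isCoboundedUnder_le hle)
    (le_limsup_of_frequently_le hfreq (isBoundedUnder_of_eventually_le hle))

lemma abs_mem_Icc_of_mem_union_neg {x t : ℝ} (ht : t ∈ Icc (-2 * x) (-x) ∪ Icc x (2 * x)) :
    |t| ∈ Icc x (2 * x) := by
  rcases ht with ⟨h₁, h₂⟩ | ⟨h₁, h₂⟩
  · rw [abs_of_nonpos (by linarith)]
    exact ⟨by linarith, by linarith⟩
  · rw [abs_of_nonneg (by linarith)]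
    exact ⟨h₁, h₂⟩

/-- `log (log b / log a) ≤ log b / log a - 1`. -/
lemma log_log_sub_log_log_le {a b : ℝ} (ha : 1 < a) (hab : a ≤ b) :
    log (log b) - log (log a) ≤ log (b / a) / log a := by
  have hla : 0 < log a := log_pos ha
  have hlb : 0 < log b := log_pos (ha.trans_le hab)
  calc log (log b) - log (log a) = log (log b / log a) := (log_div hlb.ne' hla.ne').symm
    _ ≤ log b / log a - 1 := log_le_sub_one_of_pos (div_pos hlb hla)
    _ = log (b / a) / log a := by
      rw [log_div (by linarith) (by linarith)]
      field_simp

/-- The phase `log (log |x|) · χ_{|x| ≥ e}` without the indicator: both vanish at `|x| = e`. -/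
noncomputable def logLogAbs (x : ℝ) : ℝ := log (log (max (exp 1) |x|))

lemma logLogAbs_of_exp_one_le {x : ℝ} (hx : exp 1 ≤ |x|) : logLogAbs x = log (log |x|) := by
  rw [logLogAbs, max_eq_right hx]

lemma indicator_log_log_abs_eq_logLogAbs (x : ℝ) :
    indicator {y : ℝ | exp 1 ≤ |y|} (fun y => log (log |y|)) x = logLogAbs x := by
  by_cases hx : exp 1 ≤ |x|
  · rw [indicator_of_mem (show x ∈ {y : ℝ | exp 1 ≤ |y|} from hx), logLogAbs_of_exp_one_le hx]
  · rw [indicator_of_notMem (show x ∉ {y : ℝ | exp 1 ≤ |y|} from hx), logLogAbs,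
      max_eq_left (not_le.mp hx).le, log_exp, log_one]

lemma continuous_logLogAbs : Continuous logLogAbs := by
  have hpos : ∀ x : ℝ, 0 < max (exp 1) |x| := fun x => (exp_pos 1).trans_le (le_max_left _ _)
  have hlogpos : ∀ x : ℝ, 0 < log (max (exp 1) |x|) := fun x =>
    (log_pos (one_lt_exp_iff.mpr one_pos)).trans_le
      (log_le_log (exp_pos 1) (le_max_left _ _))
  exact ((continuous_const.max continuous_abs).log fun x => (hpos x).ne').log
    fun x => (hlogpos x).ne'

lemma abs_logLogAbs_sub_le {x t τ : ℝ} (hx : exp 1 ≤ x) (ht : |t| ∈ Icc x (2 * x))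
    (hτ : |τ| ∈ Icc x (2 * x)) : |logLogAbs t - logLogAbs τ| ≤ log 2 / log x := by
  have hx1 : 1 < x := (one_lt_exp_iff.mpr one_pos).trans_le hx
  have hx0 : 0 < x := one_pos.trans hx1
  have hbounds : ∀ s : ℝ, |s| ∈ Icc x (2 * x) →
      log (log x) ≤ logLogAbs s ∧ logLogAbs s ≤ log (log (2 * x)) := by
    rintro s ⟨hs₁, hs₂⟩
    rw [logLogAbs_of_exp_one_le (hx.trans hs₁)]
    exact ⟨log_le_log (log_pos hx1) (log_le_log hx0 hs₁),
      log_le_log (log_pos (hx1.trans_le hs₁)) (log_le_log (hx0.trans_le hs₁) hs₂)⟩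
  obtain ⟨ht₁, ht₂⟩ := hbounds t ht
  obtain ⟨hτ₁, hτ₂⟩ := hbounds τ hτ
  have hwidth := log_log_sub_log_log_le hx1 (by linarith : x ≤ 2 * x)
  rw [mul_div_cancel_right₀ _ hx0.ne'] at hwidth
  rw [abs_le]
  constructor <;> linarith

lemma tendsto_oscR_const_add_sin_logLogAbs (α : ℝ) :
    Tendsto (fun x : ℝ =>
      oscR (fun y => α + sin (logLogAbs y)) (Icc (-2 * x) (-x) ∪ Icc x (2 * x))) atTop (𝓝 0) := by
  have hosc : ∀ᶠ x : ℝ in atTop,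
      oscR (fun y => α + sin (logLogAbs y)) (Icc (-2 * x) (-x) ∪ Icc x (2 * x)) ≤
        log 2 / log x := by
    filter_upwards [eventually_ge_atTop (exp 1)] with x hx
    have hlogx : 0 < log x := log_pos ((one_lt_exp_iff.mpr one_pos).trans_le hx)
    refine oscR_le (div_nonneg (log_nonneg one_le_two) hlogx.le) fun t ht τ hτ => ?_
    calc |α + sin (logLogAbs t) - (α + sin (logLogAbs τ))|
        = |sin (logLogAbs t) - sin (logLogAbs τ)| := by rw [add_sub_add_left_eq_sub]
      _ ≤ |logLogAbs t - logLogAbs τ| := abs_sin_sub_sin_le _ _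
      _ ≤ log 2 / log x :=
        abs_logLogAbs_sub_le hx (abs_mem_Icc_of_mem_union_neg ht) (abs_mem_Icc_of_mem_union_neg hτ)
  exact squeeze_zero' (Eventually.of_forall fun x => oscR_nonneg _ _) hosc
    (tendsto_const_nhds.div_atTop tendsto_log_atTop)

lemma logLogAbs_exp_exp {r : ℝ} (hr : 0 ≤ r) : logLogAbs (exp (exp r)) = r := by
  have habs : |exp (exp r)| = exp (exp r) := abs_of_pos (exp_pos _)
  rw [logLogAbs_of_exp_one_le (by rw [habs, exp_le_exp]; exact one_le_exp hr), habs, log_exp,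
    log_exp]

/-- Along `x = exp (exp (c + 2πn))` the phase `log (log x)` runs through `c + 2πℕ`. -/
lemma frequently_sin_logLogAbs_eq (c : ℝ) : ∃ᶠ x in atTop, sin (logLogAbs x) = sin c := by
  have htend : Tendsto (fun n : ℕ => c + n * (2 * π)) atTop atTop :=
    tendsto_atTop_add_const_left _ _
      (tendsto_natCast_atTop_atTop.atTop_mul_const (by positivity))
  refine (tendsto_exp_atTop.comp (tendsto_exp_atTop.comp htend)).frequently
    ((htend.eventually (eventually_ge_atTop 0)).mono fun n hn => ?_).frequently
  simp only [Function.comp_apply, logLogAbs_exp_exp hn, sin_add_nat_mul_two_pi]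

/-- Lerner's exponent `p_L(x) = α + sin(log(log|x|)·χ_{|x|≥e}(x))` with `α > 2` is
continuous, has infimum `α - 1 > 1` and bounded above, is slowly oscillating, but
has `liminf_{x→+∞} p_L = α - 1 < α + 1 = limsup_{x→+∞} p_L`; in particular it has
no limit at `+∞`, so `p_L ∉ C(ℝ̇)`. -/
theorem lerner_exponent_SO (α : ℝ) (hα : 2 < α)
    (pL : ℝ → ℝ)
    (hpL : ∀ x : ℝ, pL x =
      α + Real.sin (Set.indicator {y : ℝ | Real.exp 1 ≤ |y|}
        (fun y => Real.log (Real.log |y|)) x)) :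
    Continuous pL ∧
    (1 < ⨅ x : ℝ, pL x) ∧
    BddAbove (Set.range pL) ∧
    Tendsto (fun x : ℝ => oscR pL (Icc (-2*x) (-x) ∪ Icc x (2*x))) atTop (nhds 0) ∧
    Filter.liminf pL atTop = α - 1 ∧
    Filter.limsup pL atTop = α + 1 ∧
    α - 1 < α + 1 ∧
    ¬ ∃ L : ℝ, Tendsto pL atTop (nhds L) := by
  obtain rfl : pL = fun x => α + sin (logLogAbs x) := by
    funext x
    rw [hpL, indicator_log_log_abs_eq_logLogAbs]
  have hub : ∀ x, α + sin (logLogAbs x) ≤ α + 1 := fun x => by linarith [sin_le_one (logLogAbs x)]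
  have hlb : ∀ x, α - 1 ≤ α + sin (logLogAbs x) := fun x => by
    linarith [neg_one_le_sin (logLogAbs x)]
  have hliminf : liminf (fun x => α + sin (logLogAbs x)) atTop = α - 1 := by
    refine liminf_eq_of_eventually_le_of_frequently_le (isBoundedUnder_of ⟨_, hub⟩)
      (Eventually.of_forall hlb) ((frequently_sin_logLogAbs_eq (-(π / 2))).mono fun x hx => ?_)
    rw [hx, sin_neg, sin_pi_div_two, ← sub_eq_add_neg]
  have hlimsup : limsup (fun x => α + sin (logLogAbs x)) atTop = α + 1 := by
    refine limsup_eq_of_eventually_le_of_frequently_le (isBoundedUnder_of ⟨_, hlb⟩)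
      (Eventually.of_forall hub) ((frequently_sin_logLogAbs_eq (π / 2)).mono fun x hx => ?_)
    rw [hx, sin_pi_div_two]
  refine ⟨continuous_const.add (continuous_sin.comp continuous_logLogAbs),
    by linarith [le_ciInf hlb], ⟨α + 1, forall_mem_range.mpr hub⟩,
    tendsto_oscR_const_add_sin_logLogAbs α, hliminf, hlimsup, by linarith, ?_⟩
  rintro ⟨L, hL⟩
  linarith [hliminf ▸ hL.liminf_eq, hlimsup ▸ hL.limsup_eq]
end

section
/- Suppose p : ℝ → (1,∞) is slowly oscillating with 1 < p₋ := inf p ≤ sup p =: p₊ < ∞. Let (h_k) tend to +∞ with p(h_k) → q. Suppose w and w_k are continuous on ℝ, w_k → w pointwise with uniform convergence on compact sets, and there is C > 0 with |w(x)| ≤ C/(1+|x|) and |w_k(x)| ≤ C/(1+|x|) for all k and x. Then for every λ > 0, ∫_ℝ |w_k(x)/λ|^{p(x+h_k)} dx → ∫_ℝ |w(x)/λ|^q dx as k → ∞. -/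
/-!
Slow oscillation makes `p (x + h k) - p (h k) → 0` for each fixed `x`, since for large `k` both
`x + h k` and `h k` lie in `[y, 2y]` with `y = h k - |x|`; hence the integrands converge pointwise
to `|w x / λ| ^ q`. Since the exponents lie in `[p₋, p₊]` and the bases are at most
`(C / λ) / (1 + |x|)`, the integrands are dominated by a multiple of `(1 + |x|) ^ (-p₋)`, which is
integrable because `p₋ > 1`, and dominated convergence concludes.
-/

open Filter Set MeasureTheory

open Topology

def SlowlyOscillating (p : ℝ → ℝ) : Prop :=
  Tendsto (fun x : ℝ => oscR p (Icc (-2*x) (-x) ∪ Icc x (2*x))) atTop (𝓝 0)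

lemma abs_sub_le_oscR {f : ℝ → ℝ} {J : Set ℝ} {M : ℝ} (hM : ∀ a b, |f a - f b| ≤ M)
    {t τ : ℝ} (ht : t ∈ J) (hτ : τ ∈ J) : |f t - f τ| ≤ oscR f J := by
  have hM0 : 0 ≤ M := (abs_nonneg _).trans (hM t t)
  have inner_le : ∀ t', ⨆ τ' ∈ J, |f t' - f τ'| ≤ M := fun t' =>
    Real.iSup_le (fun τ' => Real.iSup_le (fun _ => hM _ _) hM0) hM0
  calc |f t - f τ| ≤ ⨆ τ' ∈ J, |f t - f τ'| :=
        le_ciSup₂ (f := fun τ' (_ : τ' ∈ J) => |f t - f τ'|)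
          ⟨M, by
            simp only [mem_upperBounds, mem_iUnion, mem_range]
            rintro _ ⟨_, _, rfl⟩
            exact hM _ _⟩ τ hτ
    _ ≤ oscR f J :=
        le_ciSup₂ (f := fun t' (_ : t' ∈ J) => ⨆ τ' ∈ J, |f t' - f τ'|)
          ⟨M, by
            simp only [mem_upperBounds, mem_iUnion, mem_range]
            rintro _ ⟨_, _, rfl⟩
            exact inner_le _⟩ t ht

theorem SlowlyOscillating.tendsto_comp_add {p : ℝ → ℝ} (hp : SlowlyOscillating p) {M : ℝ}
    (hM : ∀ a b, |p a - p b| ≤ M) {ι : Type*} {l : Filter ι} {h : ι → ℝ}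
    (hh : Tendsto h l atTop) {q : ℝ} (hq : Tendsto (fun k => p (h k)) l (𝓝 q)) (x : ℝ) :
    Tendsto (fun k => p (x + h k)) l (𝓝 q) := by
  have hshift : Tendsto (fun k => p (x + h k) - p (h k)) l (𝓝 0) := by
    refine squeeze_zero_norm' ?_ (hp.comp (tendsto_atTop_add_const_right _ (-|x|) hh))
    filter_upwards [hh.eventually_ge_atTop (3 * |x|)] with k hk
    rw [Real.norm_eq_abs]
    refine abs_sub_le_oscR hM (mem_union_right _ ⟨?_, ?_⟩) (mem_union_right _ ⟨?_, ?_⟩) <;>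
      linarith [le_abs_self x, neg_abs_le x]
  simpa using hshift.add hq

theorem rpow_le_rpow_mul_rpow_of_mem_Icc {a b B e r s : ℝ} (ha : 0 ≤ a) (hab : a ≤ b)
    (hbB : b ≤ B) (hB : 1 ≤ B) (hr : 0 < r) (he : e ∈ Icc r s) :
    a ^ e ≤ B ^ (s - r) * b ^ r := by
  have hsr : 0 ≤ s - r := by linarith [he.1, he.2]
  rcases le_or_gt a 1 with ha1 | ha1
  · calc a ^ e ≤ a ^ r := Real.rpow_le_rpow_of_exponent_ge' ha ha1 hr.le he.1
      _ ≤ b ^ r := Real.rpow_le_rpow ha hab hr.le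
      _ ≤ B ^ (s - r) * b ^ r :=
        le_mul_of_one_le_left (Real.rpow_nonneg (ha.trans hab) _) (Real.one_le_rpow hB hsr)
  · calc a ^ e ≤ a ^ s := Real.rpow_le_rpow_of_exponent_le ha1.le he.2
      _ = a ^ (s - r) * a ^ r := by rw [← Real.rpow_add (by linarith), sub_add_cancel]
      _ ≤ B ^ (s - r) * b ^ r := by gcongr; linarith

theorem rpow_le_of_le_div_one_add_abs {a c e r s x : ℝ} (ha : 0 ≤ a) (hac : a ≤ c / (1 + |x|))
    (hr : 0 < r) (he : e ∈ Icc r s) : a ^ e ≤ max c 1 ^ s * (1 + |x|) ^ (-r) := by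
  set B := max c 1
  have hB : 1 ≤ B := le_max_right _ _
  have hx : 1 ≤ 1 + |x| := le_add_of_nonneg_right (abs_nonneg x)
  have hab : a ≤ B / (1 + |x|) := hac.trans (by gcongr; exact le_max_left _ _)
  calc a ^ e ≤ B ^ (s - r) * (B / (1 + |x|)) ^ r :=
        rpow_le_rpow_mul_rpow_of_mem_Icc ha hab (div_le_self (by positivity) hx) hB hr he
    _ = B ^ s * (1 + |x|) ^ (-r) := by
        rw [Real.div_rpow (by positivity) (by positivity), Real.rpow_neg (by positivity),
          Real.rpow_sub (by positivity)]
        field_simp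

theorem tendsto_integral_rpow_of_le_div_one_add_abs {ι : Type*} {l : Filter ι}
    [l.IsCountablyGenerated] [l.NeBot] {f e : ι → ℝ → ℝ} {g q : ℝ → ℝ} {c r s : ℝ}
    (hf : ∀ k, Measurable (f k)) (he : ∀ k, Measurable (e k)) (hr : 1 < r)
    (he_mem : ∀ k x, e k x ∈ Icc r s) (hf_nonneg : ∀ k x, 0 ≤ f k x)
    (hf_le : ∀ k x, f k x ≤ c / (1 + |x|))
    (hfg : ∀ x, Tendsto (f · x) l (𝓝 (g x))) (heq : ∀ x, Tendsto (e · x) l (𝓝 (q x))) :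
    Tendsto (fun k => ∫ x, f k x ^ e k x) l (𝓝 (∫ x, g x ^ q x)) := by
  have hr0 : 0 < r := one_pos.trans hr
  have hbound_int : Integrable (fun x : ℝ => max c 1 ^ s * (1 + |x|) ^ (-r)) := by
    refine Integrable.const_mul ?_ _
    simpa only [Real.norm_eq_abs] using
      integrable_one_add_norm (E := ℝ) (μ := volume) (by simpa using hr)
  refine tendsto_integral_filter_of_dominated_convergence _
    (Eventually.of_forall fun k => ((hf k).pow (he k)).aestronglyMeasurable) ?_ hbound_int
    (ae_of_all _ fun x => (hfg x).rpow (heq x) (Or.inr ?_))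
  · refine Eventually.of_forall fun k => ae_of_all _ fun x => ?_
    rw [Real.norm_eq_abs, abs_of_nonneg (Real.rpow_nonneg (hf_nonneg k x) _)]
    exact rpow_le_of_le_div_one_add_abs (hf_nonneg k x) (hf_le k x) hr0 (he_mem k x)
  · exact hr0.trans_le (ge_of_tendsto' (heq x) fun k => (he_mem k x).1)

theorem modular_convergence_general
    (p : ℝ → ℝ) (hpcont : Continuous p)
    (pm pP : ℝ) (hpm : 1 < pm) (hlb : ∀ x, pm ≤ p x) (hub : ∀ x, p x ≤ pP)
    (hSO : Tendsto (fun x : ℝ => oscR p (Icc (-2*x) (-x) ∪ Icc x (2*x))) atTop (nhds 0))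
    (h : ℕ → ℝ) (hh : Tendsto h atTop atTop)
    (q : ℝ) (hq : Tendsto (fun k => p (h k)) atTop (nhds q))
    (w : ℝ → ℂ) (wk : ℕ → ℝ → ℂ)
    (hwkc : ∀ k, Continuous (wk k))
    (hunif : ∀ J : Set ℝ, IsCompact J → TendstoUniformlyOn (fun k x => wk k x) w atTop J)
    (C : ℝ)
    (hwkbd : ∀ k x, ‖wk k x‖ ≤ C / (1 + |x|))
    (lam : ℝ) (hlam : 0 < lam) :
    Tendsto (fun k => ∫ x : ℝ, (‖wk k x‖ / lam) ^ p (x + h k))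
      atTop (nhds (∫ x : ℝ, (‖w x‖ / lam) ^ q)) := by
  have hM : ∀ a b, |p a - p b| ≤ pP - pm := fun a b =>
    abs_sub_le_iff.2 ⟨by linarith [hub a, hlb b], by linarith [hub b, hlb a]⟩
  have hexp (x : ℝ) : Tendsto (fun k => p (x + h k)) atTop (𝓝 q) :=
    (show SlowlyOscillating p from hSO).tendsto_comp_add hM hh hq x
  have hbase (x : ℝ) : Tendsto (fun k => ‖wk k x‖ / lam) atTop (𝓝 (‖w x‖ / lam)) :=
    ((hunif {x} isCompact_singleton).tendsto_at (mem_singleton x)).norm.div_const lam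
  have hdecay (k : ℕ) (x : ℝ) : ‖wk k x‖ / lam ≤ C / lam / (1 + |x|) :=
    (div_le_div_of_nonneg_right (hwkbd k x) hlam.le).trans_eq (div_right_comm _ _ _)
  exact tendsto_integral_rpow_of_le_div_one_add_abs (q := fun _ => q)
    (fun k => ((hwkc k).norm.div_const lam).measurable)
    (fun k => (hpcont.comp (continuous_add_const (h k))).measurable) hpm
    (fun k x => ⟨hlb _, hub _⟩) (fun k x => by positivity) hdecay hbase hexp

/-- If `p` is slowly oscillating with `1 < inf p ≤ sup p < ∞`, `h k → +∞` with
`p (h k) → q`, `w_k → w` uniformly on compact sets, and `|w|, |w_k| ≤ C/(1+|x|)`,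
then `∫_ℝ |w_k(x)/λ|^{p(x+h_k)} dx → ∫_ℝ |w(x)/λ|^q dx` for every `λ > 0`. -/
theorem modular_convergence
    (p : ℝ → ℝ) (hpcont : Continuous p)
    (pm pP : ℝ) (hpm : 1 < pm) (hlb : ∀ x, pm ≤ p x) (hub : ∀ x, p x ≤ pP)
    (hSO : Tendsto (fun x : ℝ => oscR p (Icc (-2*x) (-x) ∪ Icc x (2*x))) atTop (nhds 0))
    (h : ℕ → ℝ) (hh : Tendsto h atTop atTop)
    (q : ℝ) (hq : Tendsto (fun k => p (h k)) atTop (nhds q))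
    (w : ℝ → ℂ) (wk : ℕ → ℝ → ℂ)
    (hwc : Continuous w) (hwkc : ∀ k, Continuous (wk k))
    (hunif : ∀ J : Set ℝ, IsCompact J → TendstoUniformlyOn (fun k x => wk k x) w atTop J)
    (C : ℝ) (hC : 0 < C)
    (hwbd : ∀ x, ‖w x‖ ≤ C / (1 + |x|))
    (hwkbd : ∀ k x, ‖wk k x‖ ≤ C / (1 + |x|))
    (lam : ℝ) (hlam : 0 < lam) :
    Tendsto (fun k => ∫ x : ℝ, (‖wk k x‖ / lam) ^ p (x + h k))
      atTop (nhds (∫ x : ℝ, (‖w x‖ / lam) ^ q)) :=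
  modular_convergence_general p hpcont pm pP hpm hlb hub hSO h hh q hq w wk hwkc hunif C hwkbd lam
    hlam
end
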